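/- For (x₁, x₂) ∈ (0,1)², let S(x₁,x₂) = x₁(1−x₂) + x₁³(1−x₂³)/3 + x₁⁶(1−x₂⁶)/6 and define f : (0,1)² → ℝ² by f(x₁,x₂) = ( x₁(1−x₂)/S(x₁,x₂), x₁³(1−x₂³)/(3 S(x₁,x₂)) ). Then the Jacobian determinant of f at (x₁,x₂) equals −(1/(6 S(x₁,x₂)³)) · x₁⁹ (x₂−1)⁴ (x₂² + x₂ + 1)(x₂² + 3x₂ + 1), and in particular it is nonzero at every point of (0,1)². -/

import Mathlib

/-! By the quotient rule, the Jacobian determinant of `q ↦ (u/s, v/s)` with `s = u + v + w` is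
`(u ∇v∧∇w + v ∇w∧∇u + w ∇u∧∇v) / s³`: expanding `∇s = ∇u + ∇v + ∇w`, the coefficient of
`∇u∧∇v` is `s − u − v = w`. Here `u, v, w` are the terms `x₁ᵏ(1 − x₂ᵏ)/k` for `k = 1, 3, 6`, with
gradients `(x₁ᵏ⁻¹(1 − x₂ᵏ), −x₁ᵏ x₂ᵏ⁻¹)`, and the numerator is the polynomial
`−x₁⁹(x₂ − 1)⁴(x₂² + x₂ + 1)(x₂² + 3x₂ + 1)/6`, none of whose factors vanishes on `(0,1)²`. -/

/-- `S(x₁, x₂) = x₁(1−x₂) + x₁³(1−x₂³)/3 + x₁⁶(1−x₂⁶)/6`, the sum of the coordinates of the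
vector `(x₁(1−x₂), x₁³(1−x₂³)/3, x₁⁶(1−x₂⁶)/6)`. -/
noncomputable def Ssum (p : Fin 2 → ℝ) : ℝ :=
  p 0 * (1 - p 1) + p 0 ^ 3 * (1 - p 1 ^ 3) / 3 + p 0 ^ 6 * (1 - p 1 ^ 6) / 6

/-- `f(x₁, x₂) = (x₁(1−x₂)/S, x₁³(1−x₂³)/(3S))`: the first two coordinates of the
`ℓ₁`-normalization of the vector `(x₁(1−x₂), x₁³(1−x₂³)/3, x₁⁶(1−x₂⁶)/6)`. -/
noncomputable def fmap (p : Fin 2 → ℝ) : Fin 2 → ℝ :=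
  ![p 0 * (1 - p 1) / Ssum p, p 0 ^ 3 * (1 - p 1 ^ 3) / (3 * Ssum p)]

open ContinuousLinearMap

theorem HasFDerivAt.div {𝕜 E : Type*} [NontriviallyNormedField 𝕜] [NormedAddCommGroup E]
    [NormedSpace 𝕜 E] {u s : E → 𝕜} {u' s' : E →L[𝕜] 𝕜} {p : E}
    (hu : HasFDerivAt u u' p) (hs : HasFDerivAt s s' p) (hp : s p ≠ 0) :
    HasFDerivAt (fun q => u q / s q) ((s p ^ 2)⁻¹ • (s p • u' - u p • s')) p := by
  simp_rw [div_eq_mul_inv]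
  refine (hu.mul ((hasDerivAt_inv hp).comp_hasFDerivAt p hs)).congr_fderiv ?_
  ext v
  simp only [Function.comp_apply, add_apply, smul_apply, smul_eq_mul, neg_mul, mul_neg, sub_apply]
  field_simp
  ring

def wedge (a b : (Fin 2 → ℝ) →L[ℝ] ℝ) : ℝ :=
  a (Pi.single 0 1) * b (Pi.single 1 1) - a (Pi.single 1 1) * b (Pi.single 0 1)

theorem det_pi_fin_two (a b : (Fin 2 → ℝ) →L[ℝ] ℝ) :
    (ContinuousLinearMap.pi ![a, b]).det = wedge a b := by
  rw [ContinuousLinearMap.det, ← LinearMap.det_toMatrix (Pi.basisFun ℝ (Fin 2)),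
    Matrix.det_fin_two]
  simp [wedge]

theorem wedge_smul_proj_sub_smul_proj (a b c d : ℝ) :
    wedge (a • proj 0 - b • proj 1) (c • proj 0 - d • proj 1) = b * c - a * d := by
  simp only [wedge, sub_apply, smul_apply, proj_apply, smul_eq_mul, Pi.single_eq_same,
    Pi.single_eq_of_ne one_ne_zero, Pi.single_eq_of_ne zero_ne_one]
  ring

theorem det_fderiv_eq_wedge {f : (Fin 2 → ℝ) → Fin 2 → ℝ} {a b : (Fin 2 → ℝ) →L[ℝ] ℝ}
    {p : Fin 2 → ℝ} (h0 : HasFDerivAt (fun q => f q 0) a p)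
    (h1 : HasFDerivAt (fun q => f q 1) b p) :
    (fderiv ℝ f p).det = wedge a b := by
  have hf : HasFDerivAt f (ContinuousLinearMap.pi ![a, b]) p :=
    hasFDerivAt_pi.2 (Fin.forall_fin_two.2 ⟨h0, h1⟩)
  rw [hf.fderiv, det_pi_fin_two]

theorem det_fderiv_normalize {u v w : (Fin 2 → ℝ) → ℝ} {u' v' w' : (Fin 2 → ℝ) →L[ℝ] ℝ}
    {p : Fin 2 → ℝ} (hu : HasFDerivAt u u' p) (hv : HasFDerivAt v v' p)
    (hw : HasFDerivAt w w' p) (hs : u p + v p + w p ≠ 0) :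
    (fderiv ℝ (fun q => ![u q / (u q + v q + w q), v q / (u q + v q + w q)]) p).det =
      (u p * wedge v' w' + v p * wedge w' u' + w p * wedge u' v') / (u p + v p + w p) ^ 3 := by
  have hs' := (hu.fun_add hv).fun_add hw
  rw [det_fderiv_eq_wedge (hu.div hs' hs) (hv.div hs' hs)]
  simp only [wedge, smul_apply, sub_apply, add_apply, smul_eq_mul]
  field_simp
  ring

noncomputable def powerTerm (k : ℕ) (q : Fin 2 → ℝ) : ℝ := q 0 ^ k * (1 - q 1 ^ k) / k

theorem hasFDerivAt_powerTerm {k : ℕ} (hk : k ≠ 0) (p : Fin 2 → ℝ) :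
    HasFDerivAt (powerTerm k)
      ((p 0 ^ (k - 1) * (1 - p 1 ^ k)) • proj 0 - (p 0 ^ k * p 1 ^ (k - 1)) • proj 1 :
        (Fin 2 → ℝ) →L[ℝ] ℝ) p := by
  have h0 := (hasFDerivAt_apply (𝕜 := ℝ) 0 p).pow k
  have h1 := (hasFDerivAt_apply (𝕜 := ℝ) 1 p).pow k
  unfold powerTerm
  simp_rw [div_eq_mul_inv]
  refine ((h0.fun_mul ((hasFDerivAt_const 1 p).fun_sub h1)).mul_const (k : ℝ)⁻¹).congr_fderiv ?_
  ext v
  simp only [nsmul_eq_mul, zero_sub, smul_neg, smul_add, add_apply, neg_apply, smul_apply,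
    proj_apply, smul_eq_mul, sub_apply]
  field_simp
  ring

theorem Ssum_eq_sum_powerTerm (q : Fin 2 → ℝ) :
    Ssum q = powerTerm 1 q + powerTerm 3 q + powerTerm 6 q := by
  simp [Ssum, powerTerm]

theorem fmap_eq_normalize : fmap = fun q =>
    ![powerTerm 1 q / (powerTerm 1 q + powerTerm 3 q + powerTerm 6 q),
      powerTerm 3 q / (powerTerm 1 q + powerTerm 3 q + powerTerm 6 q)] := by
  funext q
  rw [← Ssum_eq_sum_powerTerm]
  ext i
  fin_cases i <;> simp [fmap, powerTerm, div_div]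

theorem det_fderiv_fmap {p : Fin 2 → ℝ} (hS : Ssum p ≠ 0) :
    (fderiv ℝ fmap p).det =
      -(1 / (6 * Ssum p ^ 3)) * p 0 ^ 9 * (p 1 - 1) ^ 4 *
        (p 1 ^ 2 + p 1 + 1) * (p 1 ^ 2 + 3 * p 1 + 1) := by
  rw [Ssum_eq_sum_powerTerm] at hS ⊢
  rw [fmap_eq_normalize, det_fderiv_normalize (hasFDerivAt_powerTerm one_ne_zero p)
    (hasFDerivAt_powerTerm (by norm_num) p) (hasFDerivAt_powerTerm (by norm_num) p) hS]
  simp only [wedge_smul_proj_sub_smul_proj, powerTerm]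
  field_simp
  ring

theorem powerTerm_pos {k : ℕ} (hk : k ≠ 0) {q : Fin 2 → ℝ} (h0 : 0 < q 0) (h1 : 0 ≤ q 1)
    (h1' : q 1 < 1) : 0 < powerTerm k q :=
  div_pos (mul_pos (pow_pos h0 k) (sub_pos.2 (pow_lt_one₀ h1 h1' hk))) (by positivity)

theorem Ssum_pos {q : Fin 2 → ℝ} (h0 : 0 < q 0) (h1 : 0 ≤ q 1) (h1' : q 1 < 1) :
    0 < Ssum q := by
  rw [Ssum_eq_sum_powerTerm]
  have := powerTerm_pos one_ne_zero h0 h1 h1'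
  have := powerTerm_pos (k := 3) (by norm_num) h0 h1 h1'
  have := powerTerm_pos (k := 6) (by norm_num) h0 h1 h1'
  positivity

theorem jacobian_formula (p : Fin 2 → ℝ)
    (h0 : 0 < p 0) (h1 : 0 < p 1) (h1' : p 1 < 1) :
    (fderiv ℝ fmap p).det =
        -(1 / (6 * Ssum p ^ 3)) * p 0 ^ 9 * (p 1 - 1) ^ 4 *
          (p 1 ^ 2 + p 1 + 1) * (p 1 ^ 2 + 3 * p 1 + 1) ∧
      (fderiv ℝ fmap p).det ≠ 0 := by
  have hS : 0 < Ssum p := Ssum_pos h0 h1.le h1'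
  have hJ := det_fderiv_fmap hS.ne'
  refine ⟨hJ, hJ ▸ ?_⟩
  have hq₁ : 0 < p 1 ^ 2 + p 1 + 1 := by positivity
  have hq₂ : 0 < p 1 ^ 2 + 3 * p 1 + 1 := by positivity
  simp [hS.ne', h0.ne', sub_ne_zero.2 h1'.ne, hq₁.ne', hq₂.ne']
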